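/- Let E be a CPTN super-operator on L(H), and define for projectors Q: wp(Q) = E(E†(Q)) (the eigenvalue-1 eigenspace of E†(Q)), wlp(Q) = ker(E†(Q⊥)), and T = wp(I). Then for every projector Q, wp(Q) = wlp(Q) ∧ T, where ∧ is intersection of subspaces. -/

import Mathlib

open Matrix
open scoped ComplexOrder

noncomputable section

/-- Löwner order: `A ⊑ B` iff `B - A` is positive semidefinite. -/
def Loewner {d : Type*} [Fintype d] (A B : Matrix d d ℂ) : Prop :=
  (B - A).PosSemidef

/-- An effect: a positive semidefinite operator bounded above by the identity. -/
def IsEffect {d : Type*} [Fintype d] [DecidableEq d] (M : Matrix d d ℂ) : Prop :=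
  M.PosSemidef ∧ (1 - M).PosSemidef

/-- A (partial) density operator: positive semidefinite with trace at most 1. -/
def IsDensity {d : Type*} [Fintype d] (ρ : Matrix d d ℂ) : Prop :=
  ρ.PosSemidef ∧ ρ.trace.re ≤ 1

/-- An orthogonal projector: Hermitian idempotent. -/
def IsProj {d : Type*} [Fintype d] (P : Matrix d d ℂ) : Prop :=
  P.IsHermitian ∧ P * P = P

-- Demonic expectation: `inf_{M ∈ Θ} tr(M ρ)`, with the convention that the
-- infimum over the empty set is `tr ρ`.
open Classical in
def demExp {d : Type*} [Fintype d] (Θ : Set (Matrix d d ℂ)) (ρ : Matrix d d ℂ) : ℝ :=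
  if Θ = ∅ then ρ.trace.re else sInf ((fun M => (M * ρ).trace.re) '' Θ)

/-- Angelic expectation: `sup_{M ∈ Θ} tr(M ρ)`; note `sSup ∅ = 0` in `ℝ`,
matching the convention that the supremum over the empty set is `0`. -/
def angExp {d : Type*} [Fintype d] (Θ : Set (Matrix d d ℂ)) (ρ : Matrix d d ℂ) : ℝ :=
  sSup ((fun M => (M * ρ).trace.re) '' Θ)

/-- The extension `I_{Fin m} ⊗ Φ` of a super-operator `Φ`, acting blockwise. -/
def tensorMap {n : ℕ} (Φ : Matrix (Fin n) (Fin n) ℂ → Matrix (Fin n) (Fin n) ℂ) (m : ℕ)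
    (A : Matrix (Fin m × Fin n) (Fin m × Fin n) ℂ) :
    Matrix (Fin m × Fin n) (Fin m × Fin n) ℂ :=
  fun p q => Φ (Matrix.of fun a b => A (p.1, a) (q.1, b)) p.2 q.2

/-- Complete positivity: every extension `I_K ⊗ Φ` maps positive semidefinite
matrices to positive semidefinite matrices. -/
def IsCP {n : ℕ} (Φ : Matrix (Fin n) (Fin n) ℂ → Matrix (Fin n) (Fin n) ℂ) : Prop :=
  ∀ (m : ℕ) (A : Matrix (Fin m × Fin n) (Fin m × Fin n) ℂ),
    A.PosSemidef → (tensorMap Φ m A).PosSemidef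

/-- Trace-nonincreasing on positive operators. -/
def IsTNI {n : ℕ} (Φ : Matrix (Fin n) (Fin n) ℂ → Matrix (Fin n) (Fin n) ℂ) : Prop :=
  ∀ A : Matrix (Fin n) (Fin n) ℂ, A.PosSemidef → (Φ A).trace.re ≤ A.trace.re

/-- Trace-preserving on positive operators. -/
def IsTP {n : ℕ} (Φ : Matrix (Fin n) (Fin n) ℂ → Matrix (Fin n) (Fin n) ℂ) : Prop :=
  ∀ A : Matrix (Fin n) (Fin n) ℂ, A.PosSemidef → (Φ A).trace = A.trace

/-- CPTN super-operator: linear, completely positive, and trace-nonincreasing. -/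
def IsCPTN {n : ℕ} (Φ : Matrix (Fin n) (Fin n) ℂ → Matrix (Fin n) (Fin n) ℂ) : Prop :=
  IsLinearMap ℂ Φ ∧ IsCP Φ ∧ IsTNI Φ

/-- The Choi matrix `J(Φ) = (Φ ⊗ I)(Ω)` of `Φ`, where `Ω` is the maximally
entangled state on `H ⊗ H`. -/
def choi {n : ℕ} (Φ : Matrix (Fin n) (Fin n) ℂ → Matrix (Fin n) (Fin n) ℂ) :
    Matrix (Fin n × Fin n) (Fin n × Fin n) ℂ :=
  fun p q => (1 / (n : ℂ)) * Φ (Matrix.single p.2 q.2 1) p.1 q.1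

/-! Write `A = E'(Q)` and `B = E'(1 - Q)`, so that `A + B = E'(1)`. Through the duality
`tr(E(ρ) M) = tr(ρ E'(M))`, complete positivity of `E` makes `B` positive semidefinite and trace
non-increase makes `E'(1) ≤ 1`. If `A v = v`, then `⟨v, B v⟩ = ⟨v, E'(1) v⟩ - ⟨v, v⟩ ≤ 0`, so
`⟨v, B v⟩ = 0`, hence `B v = 0` and `E'(1) v = v`. The reverse inclusion is linearity of `E'`. -/

open scoped MatrixOrder

namespace Matrix

variable {ι : Type*} [Fintype ι]

theorem trace_vecMulVec_mul {R : Type*} [CommSemiring R] (v w : ι → R) (C : Matrix ι ι R) :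
    (vecMulVec v w * C).trace = w ⬝ᵥ C *ᵥ v := by
  rw [vecMulVec_mul, trace_vecMulVec, dotProduct_comm, dotProduct_mulVec]

theorem PosSemidef.trace_mul_nonneg {𝕜 : Type*} [RCLike 𝕜] {A B : Matrix ι ι 𝕜}
    (hA : A.PosSemidef) (hB : B.PosSemidef) : 0 ≤ (A * B).trace := by
  classical
  obtain ⟨C, rfl⟩ := CStarAlgebra.nonneg_iff_eq_star_mul_self.mp hA.nonneg
  rw [Matrix.mul_assoc, trace_mul_comm]
  exact (hB.mul_mul_conjTranspose_same C).trace_nonneg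

/-- In `ℂ`, `0 ≤ z` forces `z` to be real, so the quadratic form is real-valued and `A` is
Hermitian by polarization. -/
theorem posSemidef_of_dotProduct_mulVec_nonneg [DecidableEq ι] {A : Matrix ι ι ℂ}
    (h : ∀ x, 0 ≤ star x ⬝ᵥ A *ᵥ x) : A.PosSemidef := by
  rw [← isPositive_toEuclideanLin_iff, LinearMap.isPositive_iff_complex]
  intro x
  have hx : inner ℂ x (toEuclideanLin A x) = star x.ofLp ⬝ᵥ A *ᵥ x.ofLp := by
    simp [EuclideanSpace.inner_eq_star_dotProduct, dotProduct_comm]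
  obtain ⟨r, hr, hrz⟩ := RCLike.nonneg_iff_exists_ofReal.mp (h x.ofLp)
  rw [← inner_conj_symm, hx, ← hrz]
  simpa using hr

theorem PosSemidef.mulVec_eq_zero_of_mulVec_eq_self {𝕜 : Type*} [RCLike 𝕜] [DecidableEq ι]
    {A B : Matrix ι ι 𝕜} (hB : B.PosSemidef) (hAB : (1 - (A + B)).PosSemidef) {v : ι → 𝕜}
    (hv : A *ᵥ v = v) : B *ᵥ v = 0 := by
  refine (hB.dotProduct_mulVec_zero_iff v).mp (le_antisymm ?_ (hB.dotProduct_mulVec_nonneg v))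
  have hform : star v ⬝ᵥ (1 - (A + B)) *ᵥ v = -(star v ⬝ᵥ B *ᵥ v) := by
    rw [sub_mulVec, add_mulVec, hv, one_mulVec, dotProduct_sub, dotProduct_add]
    abel
  simpa [hform] using hAB.dotProduct_mulVec_nonneg v

end Matrix

theorem IsProj.posSemidef_one_sub {ι : Type*} [Fintype ι] [DecidableEq ι] {P : Matrix ι ι ℂ}
    (hP : IsProj P) : (1 - P).PosSemidef :=
  Matrix.nonneg_iff_posSemidef.mp (IsStarProjection.one_sub_nonneg ⟨hP.2, hP.1⟩)

theorem IsCP.map_posSemidef {n : ℕ} {E : Matrix (Fin n) (Fin n) ℂ → Matrix (Fin n) (Fin n) ℂ}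
    (hE : IsCP E) {M : Matrix (Fin n) (Fin n) ℂ} (hM : M.PosSemidef) : (E M).PosSemidef :=
  (hE 1 (M.submatrix Prod.snd Prod.snd) (hM.submatrix _)).submatrix fun i => ((0 : Fin 1), i)

def IsTraceAdjoint {ι : Type*} [Fintype ι] (E E' : Matrix ι ι ℂ → Matrix ι ι ℂ) : Prop :=
  ∀ A B, (E A * B).trace = (A * E' B).trace

namespace IsTraceAdjoint

theorem star_dotProduct_mulVec {ι : Type*} [Fintype ι] {E E' : Matrix ι ι ℂ → Matrix ι ι ℂ}
    (h : IsTraceAdjoint E E') (M : Matrix ι ι ℂ) (v : ι → ℂ) :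
    star v ⬝ᵥ E' M *ᵥ v = (E (vecMulVec v (star v)) * M).trace := by
  rw [h, trace_vecMulVec_mul]

variable {n : ℕ} {E E' : Matrix (Fin n) (Fin n) ℂ → Matrix (Fin n) (Fin n) ℂ}

theorem posSemidef_apply (h : IsTraceAdjoint E E') (hE : IsCP E) {M : Matrix (Fin n) (Fin n) ℂ}
    (hM : M.PosSemidef) : (E' M).PosSemidef :=
  posSemidef_of_dotProduct_mulVec_nonneg fun v => h.star_dotProduct_mulVec M v ▸
    (hE.map_posSemidef (posSemidef_vecMulVec_self_star v)).trace_mul_nonneg hM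

theorem posSemidef_one_sub_apply_one (h : IsTraceAdjoint E E') (hCP : IsCP E) (hTNI : IsTNI E) :
    (1 - E' 1).PosSemidef := by
  refine posSemidef_of_dotProduct_mulVec_nonneg fun v => ?_
  have hP := posSemidef_vecMulVec_self_star v
  have hEP := hCP.map_posSemidef hP
  have htr : star v ⬝ᵥ v = (vecMulVec v (star v)).trace := by
    rw [trace_vecMulVec, dotProduct_comm]
  rw [sub_mulVec, one_mulVec, dotProduct_sub, h.star_dotProduct_mulVec, mul_one, htr, sub_nonneg]
  -- both traces are real, so the inequality of real parts given by `hTNI` is one in `ℂ`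
  exact Complex.le_def.mpr ⟨hTNI _ hP, by rw [← (Complex.nonneg_iff.mp hEP.trace_nonneg).2,
    ← (Complex.nonneg_iff.mp hP.trace_nonneg).2]⟩

end IsTraceAdjoint

theorem wp_eq_wlp_inter_termination {n : ℕ}
    (E E' : Matrix (Fin n) (Fin n) ℂ → Matrix (Fin n) (Fin n) ℂ)
    (hE : IsCPTN E) (hE'l : IsLinearMap ℂ E')
    (hadj : ∀ A B : Matrix (Fin n) (Fin n) ℂ, (E A * B).trace = (A * E' B).trace)
    (Q : Matrix (Fin n) (Fin n) ℂ) (hQ : IsProj Q) :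
    {v : Fin n → ℂ | (E' Q).mulVec v = v} =
      {v : Fin n → ℂ | (E' (1 - Q)).mulVec v = 0} ∩
        {v : Fin n → ℂ | (E' 1).mulVec v = v} := by
  obtain ⟨-, hCP, hTNI⟩ := hE
  have hsum : E' 1 = E' Q + E' (1 - Q) := by rw [← hE'l.map_add, add_sub_cancel]
  have hB := IsTraceAdjoint.posSemidef_apply hadj hCP hQ.posSemidef_one_sub
  have hAB : (1 - (E' Q + E' (1 - Q))).PosSemidef :=
    hsum ▸ IsTraceAdjoint.posSemidef_one_sub_apply_one hadj hCP hTNI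
  ext v
  simp only [Set.mem_inter_iff, Set.mem_ofPred_eq]
  constructor
  · intro hv
    have hker := hB.mulVec_eq_zero_of_mulVec_eq_self hAB hv
    exact ⟨hker, by rw [hsum, add_mulVec, hv, hker, add_zero]⟩
  · rintro ⟨hker, hT⟩
    rwa [hsum, add_mulVec, hker, add_zero] at hT
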